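/- Assume (A)² − |α_0|²|α_1|²⋯|α_{n−1}|² > 0, where A = (1/2)·α_0⋯α_{n−1}·tr(∏_{i=0}^{n−1} T_i(λ)), and let ζ^< = (A − sgn(A)√(A² − |α_0|²⋯|α_{n−1}|²))/(α_0⋯α_{n−1}). Then for any invertible 2×2 complex matrix T_+, the kernel of the matrix (∏_{i=0}^{n−1} T_i(λ) − ζ^<·I)·T_+ is exactly one-dimensional: dim ker((∏_{i=0}^{n−1} T_i(λ) − ζ^<·I)·T_+) = 1. -/

import Mathlib

open scoped Real

/-- The transfer matrix `T(λ) = (1/α)[[e^{i(λ−Δ)}, −β], [−conj β, e^{−i(λ−Δ)}]]`. -/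
noncomputable def transferM (a b : ℂ) (d l : ℝ) : Matrix (Fin 2) (Fin 2) ℂ :=
  a⁻¹ • !![Complex.exp (Complex.I * (l - d)), -b;
           -(starRingEnd ℂ b), Complex.exp (-(Complex.I * (l - d)))]

/-- Ordered product `∏_{i=0}^{n-1} T_i = T_{n-1} ⋯ T_1 T_0`. -/
noncomputable def prodRev (T : ℕ → Matrix (Fin 2) (Fin 2) ℂ) : ℕ → Matrix (Fin 2) (Fin 2) ℂ
  | 0 => 1
  | n + 1 => T n * prodRev T n

/-- `A = (1/2)·α_0⋯α_{n−1}·tr(∏_{i=0}^{n−1} T_i)` (a real number, taken via its real part). -/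
noncomputable def Adef (αs : ℕ → ℂ) (Ts : ℕ → Matrix (Fin 2) (Fin 2) ℂ) (n : ℕ) : ℝ :=
  ((1 / 2 : ℂ) * (∏ i ∈ Finset.range n, αs i) * (prodRev Ts n).trace).re

/-- `ζ^< = (A − sgn(A)·√(A² − |α_0|²⋯|α_{n−1}|²))/(α_0⋯α_{n−1})`. -/
noncomputable def zetaLT (αs : ℕ → ℂ) (Ts : ℕ → Matrix (Fin 2) (Fin 2) ℂ) (n : ℕ) : ℂ :=
  ((Adef αs Ts n : ℂ) -
      ((Real.sign (Adef αs Ts n) *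
        Real.sqrt ((Adef αs Ts n) ^ 2 - ∏ i ∈ Finset.range n, ‖αs i‖ ^ 2) : ℝ) : ℂ)) /
    ∏ i ∈ Finset.range n, αs i

/-- `ζ^> = (A + sgn(A)·√(A² − |α_0|²⋯|α_{n−1}|²))/(α_0⋯α_{n−1})`. -/
noncomputable def zetaGT (αs : ℕ → ℂ) (Ts : ℕ → Matrix (Fin 2) (Fin 2) ℂ) (n : ℕ) : ℂ :=
  ((Adef αs Ts n : ℂ) +
      ((Real.sign (Adef αs Ts n) *
        Real.sqrt ((Adef αs Ts n) ^ 2 - ∏ i ∈ Finset.range n, ‖αs i‖ ^ 2) : ℝ) : ℂ)) /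
    ∏ i ∈ Finset.range n, αs i

/-! Writing `T_k = α_k⁻¹ S_k`, each `S_k` has the shape `[[a, b], [conj b, conj a]]`, which is
preserved under products, so `N = ∏ S_k` has real trace `2A` and determinant
`∏ (1 - |β_k|²) = ∏ |α_k|²`. Hence `ζ^< · ∏ α_k` is a root of the characteristic polynomial of `N`
other than `A = tr N / 2`, so `∏ T_k − ζ^< I` is a nonzero singular `2 × 2` matrix; multiplying it
by the invertible `T_+` keeps it nonzero and singular, so its kernel is a line. -/

open Matrix ComplexConjugate

namespace Matrix

variable {K : Type*} [Field K]

theorem det_fin_two_sub_smul_one (M : Matrix (Fin 2) (Fin 2) K) (z : K) :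
    (M - z • 1).det = z ^ 2 - z * M.trace + M.det := by
  simp only [det_fin_two, trace_fin_two, sub_apply, smul_apply, one_apply_eq,
    one_apply_ne zero_ne_one, one_apply_ne one_ne_zero, smul_eq_mul]
  ring

theorem finrank_ker_mulVecLin_eq_one_of_det_eq_zero {M : Matrix (Fin 2) (Fin 2) K}
    (hdet : M.det = 0) (hM : M ≠ 0) : Module.finrank K (LinearMap.ker M.mulVecLin) = 1 := by
  have hker : 0 < Module.finrank K (LinearMap.ker M.mulVecLin) := by
    obtain ⟨v, hv, hMv⟩ := exists_mulVec_eq_zero_iff.mpr hdet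
    exact Module.finrank_pos_iff_exists_ne_zero.mpr ⟨⟨v, hMv⟩, by simpa [Subtype.ext_iff] using hv⟩
  have hrange : 0 < Module.finrank K (LinearMap.range M.mulVecLin) := by
    rw [Nat.pos_iff_ne_zero, Ne, Submodule.finrank_eq_zero, LinearMap.range_eq_bot]
    exact fun h => hM (toLin'.map_eq_zero_iff.mp h)
  have := LinearMap.finrank_range_add_finrank_ker M.mulVecLin
  rw [Module.finrank_fin_fun] at this
  omega

theorem finrank_ker_sub_smul_one_mul_eq_one {M U : Matrix (Fin 2) (Fin 2) K} {z : K}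
    (hz : z ^ 2 - z * M.trace + M.det = 0) (htr : M.trace ≠ 2 * z) (hU : IsUnit U) :
    Module.finrank K (LinearMap.ker ((M - z • 1) * U).mulVecLin) = 1 := by
  refine finrank_ker_mulVecLin_eq_one_of_det_eq_zero ?_ ?_
  · rw [det_mul, det_fin_two_sub_smul_one, hz, zero_mul]
  · rw [Ne, hU.mul_left_eq_zero, sub_eq_zero]
    rintro rfl
    apply htr
    rw [trace_smul, trace_one, Fintype.card_fin, smul_eq_mul]
    push_cast
    ring

end Matrix

def conjPairedSubmonoid : Submonoid (Matrix (Fin 2) (Fin 2) ℂ) where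
  carrier := {M | M 1 0 = conj (M 0 1) ∧ M 1 1 = conj (M 0 0)}
  mul_mem' := by
    rintro M N ⟨hM₁, hM₂⟩ ⟨hN₁, hN₂⟩
    constructor <;> simp [mul_apply, Fin.sum_univ_two, hM₁, hM₂, hN₁, hN₂] <;> ring
  one_mem' := by simp

theorem trace_eq_two_mul_re_of_mem_conjPairedSubmonoid {M : Matrix (Fin 2) (Fin 2) ℂ}
    (hM : M ∈ conjPairedSubmonoid) : M.trace = 2 * (M 0 0).re := by
  rw [trace_fin_two, hM.2, Complex.add_conj]
  push_cast
  ring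

section prodRev

variable (T : ℕ → Matrix (Fin 2) (Fin 2) ℂ)

theorem prodRev_mem {S : Submonoid (Matrix (Fin 2) (Fin 2) ℂ)} (hT : ∀ k, T k ∈ S) (m : ℕ) :
    prodRev T m ∈ S := by
  induction m with
  | zero => exact S.one_mem
  | succ m ih => exact S.mul_mem (hT m) ih

theorem prodRev_smul (c : ℕ → ℂ) (m : ℕ) :
    prodRev (fun k => c k • T k) m = (∏ i ∈ Finset.range m, c i) • prodRev T m := by
  induction m with
  | zero => simp [prodRev]
  | succ m ih =>
    rw [prodRev, prodRev, ih, Finset.prod_range_succ, smul_mul_assoc, Matrix.mul_smul,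
      smul_smul, mul_comm]

theorem det_prodRev (m : ℕ) : (prodRev T m).det = ∏ i ∈ Finset.range m, (T i).det := by
  induction m with
  | zero => simp [prodRev]
  | succ m ih => rw [prodRev, det_mul, ih, Finset.prod_range_succ, mul_comm]

end prodRev

theorem transferM_eq_inv_smul (a b : ℂ) (d l : ℝ) :
    transferM a b d l = a⁻¹ • transferM 1 b d l := by
  simp [transferM]

theorem transferM_one_mem_conjPairedSubmonoid (b : ℂ) (d l : ℝ) :
    transferM 1 b d l ∈ conjPairedSubmonoid := by
  refine ⟨by simp [transferM], ?_⟩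
  simp [transferM, ← Complex.exp_conj]

theorem det_transferM_one (b : ℂ) (d l : ℝ) : (transferM 1 b d l).det = 1 - ‖b‖ ^ 2 := by
  simp [transferM, det_fin_two_of, ← Complex.exp_add, Complex.mul_conj, Complex.normSq_eq_norm_sq]

namespace Real

variable {A D : ℝ}

theorem ne_zero_of_lt_sq (hD : 0 ≤ D) (h : 0 < A ^ 2 - D) : A ≠ 0 := by
  rintro rfl
  linarith [zero_pow (M₀ := ℝ) two_ne_zero]

theorem sub_sign_mul_sqrt_ne (hD : 0 ≤ D) (h : 0 < A ^ 2 - D) :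
    A - sign A * √(A ^ 2 - D) ≠ A := by
  intro hμ
  rcases mul_eq_zero.mp (show sign A * √(A ^ 2 - D) = 0 by linarith) with hs | hr
  · exact ne_zero_of_lt_sq hD h (sign_eq_zero_iff.mp hs)
  · exact (sqrt_pos.mpr h).ne' hr

theorem sub_sign_mul_sqrt_isRoot (hD : 0 ≤ D) (h : 0 < A ^ 2 - D) :
    (A - sign A * √(A ^ 2 - D)) ^ 2 - 2 * A * (A - sign A * √(A ^ 2 - D)) + D = 0 := by
  have hs : sign A ^ 2 = 1 := by
    rcases sign_apply_eq_of_ne_zero A (ne_zero_of_lt_sq hD h) with hs | hs <;> simp [hs]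
  linear_combination sign A ^ 2 * sq_sqrt h.le + (A ^ 2 - D) * hs

end Real

theorem finrank_ker_prodRev_sub_zetaLT_smul_one_mul_eq_one {αs : ℕ → ℂ}
    {Ts : ℕ → Matrix (Fin 2) (Fin 2) ℂ} {n : ℕ} {N U : Matrix (Fin 2) (Fin 2) ℂ}
    (hP : ∏ i ∈ Finset.range n, αs i ≠ 0)
    (hT : prodRev Ts n = (∏ i ∈ Finset.range n, αs i)⁻¹ • N)
    (htr : N.trace = 2 * (N 0 0).re) (hdet : N.det = ∏ i ∈ Finset.range n, ‖αs i‖ ^ 2)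
    (hpos : 0 < Adef αs Ts n ^ 2 - ∏ i ∈ Finset.range n, ‖αs i‖ ^ 2) (hU : IsUnit U) :
    Module.finrank ℂ (LinearMap.ker ((prodRev Ts n - zetaLT αs Ts n • 1) * U).mulVecLin) = 1 := by
  have hA : Adef αs Ts n = (N 0 0).re := by
    rw [Adef, hT, trace_smul, smul_eq_mul, htr]
    field_simp
    simp
  rw [hA] at hpos
  rw [zetaLT, hA, hT]
  have hD : 0 ≤ ∏ i ∈ Finset.range n, ‖αs i‖ ^ 2 := by positivity
  refine finrank_ker_sub_smul_one_mul_eq_one ?_ ?_ hU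
  · have hroot := congrArg (fun x : ℝ => (x : ℂ)) (Real.sub_sign_mul_sqrt_isRoot hD hpos)
    push_cast at hroot
    rw [trace_smul, det_smul, Fintype.card_fin, htr, hdet, smul_eq_mul]
    push_cast
    field_simp
    linear_combination hroot
  · rw [trace_smul, htr, smul_eq_mul]
    intro h
    apply Real.sub_sign_mul_sqrt_ne hD hpos
    field_simp at h
    exact_mod_cast h.symm

theorem finrank_ker_eq_one_general
    (n : ℕ) (l : ℝ)
    (α β : ℕ → ℂ) (Δ : ℕ → ℝ)
    (hα : ∀ k < n, α k ≠ 0)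
    (hαβ : ∀ k < n, ‖α k‖ ^ 2 + ‖β k‖ ^ 2 = 1)
    (hpos :
      (Adef α (fun k => transferM (α k) (β k) (Δ k) l) n) ^ 2 -
        ∏ i ∈ Finset.range n, ‖α i‖ ^ 2 > 0)
    (Tplus : Matrix (Fin 2) (Fin 2) ℂ) (hTplus : IsUnit Tplus) :
    Module.finrank ℂ
      (LinearMap.ker
        ((prodRev (fun k => transferM (α k) (β k) (Δ k) l) n -
            zetaLT α (fun k => transferM (α k) (β k) (Δ k) l) n • 1) * Tplus).mulVecLin) = 1 := by
  have hconj := prodRev_mem _ (fun k => transferM_one_mem_conjPairedSubmonoid (β k) (Δ k) l) n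
  refine finrank_ker_prodRev_sub_zetaLT_smul_one_mul_eq_one
    (Finset.prod_ne_zero_iff.mpr fun i hi => hα i (Finset.mem_range.mp hi)) ?_
    (trace_eq_two_mul_re_of_mem_conjPairedSubmonoid hconj) ?_ hpos hTplus
  · simp_rw [transferM_eq_inv_smul (α _)]
    rw [prodRev_smul, Finset.prod_inv_distrib]
  · rw [det_prodRev]
    push_cast
    refine Finset.prod_congr rfl fun i hi => ?_
    rw [det_transferM_one]
    exact_mod_cast (eq_sub_of_add_eq (hαβ i (Finset.mem_range.mp hi))).symm

/-- Assume `A² − |α_0|²⋯|α_{n−1}|² > 0`.  Then for any invertible 2×2 matrix `T_+`,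
`dim ker((∏_{i=0}^{n−1} T_i(λ) − ζ^<·I)·T_+) = 1`. -/
theorem finrank_ker_eq_one
    (n : ℕ) (hn : 0 < n) (l : ℝ) (hl : 0 ≤ l ∧ l < 2 * π)
    (α β : ℕ → ℂ) (Δ : ℕ → ℝ)
    (hΔ : ∀ k < n, 0 ≤ Δ k ∧ Δ k < 2 * π)
    (hα : ∀ k < n, α k ≠ 0)
    (hαβ : ∀ k < n, ‖α k‖ ^ 2 + ‖β k‖ ^ 2 = 1)
    (hpos :
      (Adef α (fun k => transferM (α k) (β k) (Δ k) l) n) ^ 2 -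
        ∏ i ∈ Finset.range n, ‖α i‖ ^ 2 > 0)
    (Tplus : Matrix (Fin 2) (Fin 2) ℂ) (hTplus : IsUnit Tplus) :
    Module.finrank ℂ
      (LinearMap.ker
        ((prodRev (fun k => transferM (α k) (β k) (Δ k) l) n -
            zetaLT α (fun k => transferM (α k) (β k) (Δ k) l) n • 1) * Tplus).mulVecLin) = 1 :=
  finrank_ker_eq_one_general n l α β Δ hα hαβ hpos Tplus hTplus
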